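/- Let M ⊆ ℝ^{n−1} be open, let h = (h₁,…,hₙ) : M → ℝⁿ be continuously differentiable, let H(θ) = ∑_{i∈I} aᵢ hᵢ(θ)^{2βᵢ}, and assume: (i) there is c_h > 0 with H(θ) ≥ c_h for all θ ∈ M; (ii) for every θ ∈ M the n×n matrix A(θ), whose first column is (α₁h₁(θ),…,αₙhₙ(θ)) and whose (j+1)-st column is (∂h₁/∂θⱼ(θ),…,∂hₙ/∂θⱼ(θ)) for j = 1,…,n−1, is invertible. Define Φ on {(R,θ) : θ ∈ M, R + H(θ) > 0} by Φᵢ(R,θ) = hᵢ(θ) · (R + H(θ))^{−αᵢ/(2c)}. Then at every point (R,θ) with R ≥ 0 the Fréchet derivative of Φ is invertible; hence Φ is a local diffeomorphism at every such point, including points with R = 0 (the horizon). -/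

import Mathlib

open Finset

/-- `H(θ) = ∑_{i∈I} aᵢ hᵢ(θ)^{2βᵢ}`. -/
noncomputable def Hfun {m : ℕ} (α β : Fin (m + 1) → ℕ) (a : Fin (m + 1) → ℝ)
    (h : (Fin m → ℝ) → Fin (m + 1) → ℝ) (θ : Fin m → ℝ) : ℝ :=
  ∑ i ∈ univ.filter (fun i => 0 < α i), a i * (h θ i) ^ (2 * β i)

/-- The matrix `A(θ)` whose first column is `(α₁h₁(θ),…,αₙhₙ(θ))` and whose
`(j+1)`-st column is `(∂h₁/∂θⱼ(θ),…,∂hₙ/∂θⱼ(θ))`. -/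
noncomputable def Amat {m : ℕ} (α : Fin (m + 1) → ℕ)
    (h : (Fin m → ℝ) → Fin (m + 1) → ℝ) (θ : Fin m → ℝ) :
    Matrix (Fin (m + 1)) (Fin (m + 1)) ℝ :=
  Matrix.of fun i j =>
    Fin.cases ((α i : ℝ) * h θ i)
      (fun j' => fderiv ℝ (fun θ' => h θ' i) θ (Pi.single j' 1)) j

/-- The change of coordinates `Φᵢ(R,θ) = hᵢ(θ)(R + H(θ))^{−αᵢ/(2c)}` from the
intermediate compactification coordinates to the quasi-Poincaré coordinates. -/
noncomputable def PhiChange {m : ℕ} (α β : Fin (m + 1) → ℕ) (a : Fin (m + 1) → ℝ)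
    (c : ℕ) (h : (Fin m → ℝ) → Fin (m + 1) → ℝ)
    (Rθ : ℝ × (Fin m → ℝ)) : Fin (m + 1) → ℝ :=
  fun i => h Rθ.2 i * (Rθ.1 + Hfun α β a h Rθ.2) ^ (-(α i : ℝ) / (2 * (c : ℝ)))

/-! Put `u = R + H(θ)`, which is positive because `H ≥ c_h > 0` and `R ≥ 0`, and `pᵢ = −αᵢ/(2c)`.
By the product rule, `dΦ(r, w)ᵢ = u^{pᵢ} (αᵢ hᵢ(θ) s + dhᵢ(θ) w)` with `s = −(r + dH(θ) w)/(2cu)`,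
so `dΦ` is the shear `(r, w) ↦ (s, w)`, followed by `A(θ)` acting on `(s, w)`, followed by the
diagonal scaling by `u^{pᵢ}`; all three are invertible. -/

open ContinuousLinearMap in
theorem hasFDerivAt_mul_rpow_fst_add {F : Type*} [NormedAddCommGroup F] [NormedSpace ℝ F]
    {f g : F → ℝ} {f' g' : F →L[ℝ] ℝ} {x : F} {r : ℝ} (hf : HasFDerivAt f f' x)
    (hg : HasFDerivAt g g' x) (p : ℝ) (hpos : 0 < r + g x) :
    HasFDerivAt (fun q : ℝ × F => f q.2 * (q.1 + g q.2) ^ p)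
      ((r + g x) ^ p • (f'.comp (snd ℝ ℝ F) +
        (p * f x / (r + g x)) • (fst ℝ ℝ F + g'.comp (snd ℝ ℝ F)))) (r, x) := by
  have hsum : HasFDerivAt (fun q : ℝ × F => q.1 + g q.2)
      (fst ℝ ℝ F + g'.comp (snd ℝ ℝ F)) (r, x) :=
    hasFDerivAt_fst.add (hg.comp (r, x) hasFDerivAt_snd)
  refine ((hf.comp (r, x) hasFDerivAt_snd).mul
    (hsum.rpow_const (Or.inl hpos.ne'))).congr_fderiv ?_
  refine ContinuousLinearMap.ext fun v => ?_
  simp [Real.rpow_sub_one hpos.ne']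
  field_simp
  ring

open Matrix in
theorem Amat_mulVec_cons {m : ℕ} (α : Fin (m + 1) → ℕ) (h : (Fin m → ℝ) → Fin (m + 1) → ℝ)
    (θ : Fin m → ℝ) (s : ℝ) (w : Fin m → ℝ) (i : Fin (m + 1)) :
    (Amat α h θ *ᵥ Fin.cons s w) i = α i * h θ i * s + fderiv ℝ (fun θ' => h θ' i) θ w := by
  have hw := LinearMap.pi_apply_eq_sum_univ (fderiv ℝ (fun θ' => h θ' i) θ).toLinearMap w
  simp only [ContinuousLinearMap.coe_coe] at hw
  simp only [mulVec, dotProduct, Fin.sum_univ_succ, Amat, of_apply, Fin.cases_zero, Fin.cases_succ,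
    Fin.cons_zero, Fin.cons_succ, hw, smul_eq_mul]
  congr 1
  refine Finset.sum_congr rfl fun j _ => ?_
  rw [mul_comm]
  congr
  ext k
  simp [Pi.single_apply, eq_comm]

open ContinuousLinearMap in
theorem exists_continuousLinearEquiv_eq_mul_fst_add {𝕜 F : Type*} [NontriviallyNormedField 𝕜]
    [NormedAddCommGroup F] [NormedSpace 𝕜 F] {k : 𝕜} (hk : k ≠ 0) (φ : F →L[𝕜] 𝕜) :
    ∃ S : (𝕜 × F) ≃L[𝕜] (𝕜 × F), ∀ v, S v = (k * (v.1 + φ v.2), v.2) := by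
  refine ⟨.equivOfInverse ((k • (fst 𝕜 𝕜 F + φ.comp (snd 𝕜 𝕜 F))).prod (snd 𝕜 𝕜 F))
    ((k⁻¹ • fst 𝕜 𝕜 F - φ.comp (snd 𝕜 𝕜 F)).prod (snd 𝕜 𝕜 F)) (fun v => ?_) (fun v => ?_),
    fun v => rfl⟩ <;> simp [mul_add, mul_sub, hk]

open Matrix in
theorem exists_continuousLinearEquiv_of_isUnit_Amat {m : ℕ} (α : Fin (m + 1) → ℕ)
    (h : (Fin m → ℝ) → Fin (m + 1) → ℝ) (θ : Fin m → ℝ) {c u : ℝ} (hc : c ≠ 0) (hu : 0 < u)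
    (φ : (Fin m → ℝ) →L[ℝ] ℝ) (hA : IsUnit (Amat α h θ)) :
    ∃ e : (ℝ × (Fin m → ℝ)) ≃L[ℝ] (Fin (m + 1) → ℝ), ∀ v i,
      e v i = u ^ (-(α i : ℝ) / (2 * c)) * (fderiv ℝ (fun θ' => h θ' i) θ v.2 +
        -(α i : ℝ) / (2 * c) * h θ i / u * (v.1 + φ v.2)) := by
  obtain ⟨S, hS⟩ := exists_continuousLinearEquiv_eq_mul_fst_add
    (k := -(2 * c * u)⁻¹) (by simp [hc, hu.ne']) φ
  have hD : IsUnit (diagonal (fun i => u ^ (-(α i : ℝ) / (2 * c))) * Amat α h θ) :=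
    (isUnit_diagonal.2 (Pi.isUnit_iff.2 fun i => (Real.rpow_pos_of_pos hu _).ne'.isUnit)).mul hA
  refine ⟨S.trans ((Fin.consEquivL ℝ fun _ => ℝ).trans
    (toLinearEquiv' _ hD.invertible).toContinuousLinearEquiv), fun v i => ?_⟩
  change ((diagonal _ * Amat α h θ) *ᵥ Fin.cons (S v).1 (S v).2) i = _
  rw [← mulVec_mulVec, mulVec_diagonal, Amat_mulVec_cons, hS]
  field_simp
  ring

theorem differentiableAt_Hfun {m : ℕ} (α β : Fin (m + 1) → ℕ) (a : Fin (m + 1) → ℝ)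
    {h : (Fin m → ℝ) → Fin (m + 1) → ℝ} {θ : Fin m → ℝ} (hh : DifferentiableAt ℝ h θ) :
    DifferentiableAt ℝ (Hfun α β a h) θ := by
  have := differentiableAt_pi.1 hh
  unfold Hfun
  fun_prop

theorem changeOfCoordinates_fderiv_invertible_general
    {m : ℕ} (α β : Fin (m + 1) → ℕ) (a : Fin (m + 1) → ℝ) (c : ℕ)
    (hc : 0 < c)
    (M : Set (Fin m → ℝ)) (hM : IsOpen M)
    (h : (Fin m → ℝ) → Fin (m + 1) → ℝ)
    (hh : ContDiffOn ℝ 1 h M)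
    (c_h : ℝ) (hch : 0 < c_h)
    (hH : ∀ θ ∈ M, c_h ≤ Hfun α β a h θ)
    (hA : ∀ θ ∈ M, IsUnit (Amat α h θ)) :
    ∀ R : ℝ, 0 ≤ R → ∀ θ ∈ M,
      ∃ e : (ℝ × (Fin m → ℝ)) ≃L[ℝ] (Fin (m + 1) → ℝ),
        HasFDerivAt (PhiChange α β a c h)
          (e : (ℝ × (Fin m → ℝ)) →L[ℝ] (Fin (m + 1) → ℝ)) (R, θ) := by
  intro R hR θ hθ
  have hhθ : DifferentiableAt ℝ h θ :=
    (hh.differentiableOn one_ne_zero).differentiableAt (hM.mem_nhds hθ)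
  have hu : 0 < R + Hfun α β a h θ := by linarith [hH θ hθ]
  obtain ⟨e, he⟩ := exists_continuousLinearEquiv_of_isUnit_Amat α h θ
    (Nat.cast_ne_zero.2 hc.ne') hu (fderiv ℝ (Hfun α β a h) θ) (hA θ hθ)
  refine ⟨e, hasFDerivAt_pi'.2 fun i => ?_⟩
  refine (hasFDerivAt_mul_rpow_fst_add (differentiableAt_pi.1 hhθ i).hasFDerivAt
    (differentiableAt_Hfun α β a hhθ).hasFDerivAt _ hu).congr_fderiv ?_
  refine ContinuousLinearMap.ext fun v => ?_
  simp [he]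
  ring

/-- Under conditions (Dir2) and (Dir4), the change of coordinates
`C_{h,int→qP} = Φ` has invertible Fréchet derivative at every `(R,θ)` with
`R ≥ 0` and `θ ∈ M`, including points on the horizon `{R = 0}`; hence it is a
local diffeomorphism at every such point. -/
theorem changeOfCoordinates_fderiv_invertible
    {m : ℕ} (α β : Fin (m + 1) → ℕ) (a : Fin (m + 1) → ℝ) (c : ℕ)
    (hα : ∃ i, 0 < α i) (hc : 0 < c)
    (hαβ : ∀ i, 0 < α i → α i * β i = c)
    (hβ0 : ∀ i, α i = 0 → β i = 0)
    (ha : ∀ i, 1 ≤ a i)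
    (M : Set (Fin m → ℝ)) (hM : IsOpen M)
    (h : (Fin m → ℝ) → Fin (m + 1) → ℝ)
    (hh : ContDiffOn ℝ 1 h M)
    (c_h : ℝ) (hch : 0 < c_h)
    (hH : ∀ θ ∈ M, c_h ≤ Hfun α β a h θ)
    (hA : ∀ θ ∈ M, IsUnit (Amat α h θ)) :
    ∀ R : ℝ, 0 ≤ R → ∀ θ ∈ M,
      ∃ e : (ℝ × (Fin m → ℝ)) ≃L[ℝ] (Fin (m + 1) → ℝ),
        HasFDerivAt (PhiChange α β a c h)
          (e : (ℝ × (Fin m → ℝ)) →L[ℝ] (Fin (m + 1) → ℝ)) (R, θ) :=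
  changeOfCoordinates_fderiv_invertible_general α β a c hc M hM h hh c_h hch hH hA
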